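/- An ordered binary structure R = (V, ≤, (ρ_i)_{i∈I}) admits a finite monomorphic decomposition if and only if there exists a finite partition (V_1, …, V_m) of V into intervals of the linear order (V, ≤) such that every isomorphism f between finite induced suborders of (V, ≤) that preserves each interval (i.e., f maps A ∩ V_j into V_j for each j, where A is the domain of f) is a local isomorphism of R, that is, an isomorphism between the corresponding induced substructures of R. -/

import Mathlib

/-- An ordered binary structure: a domain `V`, a linear order `le` on `V`,
and a family of binary relations `rel i` on `V` indexed by `ι`. -/
structure OrdBin (ι : Type) where
  V : Type
  le : V → V → Prop
  linear : IsLinearOrder V le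
  rel : ι → V → V → Prop

namespace OrdBin

variable {ι : Type}

/-- The substructure induced on a subset `A` of the domain. -/
def restrict (R : OrdBin ι) (A : Set R.V) : OrdBin ι where
  V := A
  le := fun a b => R.le a.1 b.1
  linear := by
    haveI := R.linear
    exact
      { refl := fun a => refl_of R.le a.1
        trans := fun a b c hab hbc => trans_of R.le hab hbc
        antisymm := fun a b hab hba => Subtype.ext (antisymm_of R.le hab hba)
        total := fun a b => total_of R.le a.1 b.1 }
  rel := fun i a b => R.rel i a.1 b.1

/-- Isomorphism of ordered binary structures: a bijection of the domains preserving
the linear order and each binary relation. -/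
def Iso (R S : OrdBin ι) : Prop :=
  ∃ e : R.V ≃ S.V, (∀ x y : R.V, R.le x y ↔ S.le (e x) (e y)) ∧
    ∀ (i : ι) (x y : R.V), R.rel i x y ↔ S.rel i (e x) (e y)

/-- `R` embeds in `S` if `R` is isomorphic to an induced substructure of `S`. -/
def Embeds (R S : OrdBin ι) : Prop :=
  ∃ A : Set S.V, Iso R (S.restrict A)

/-- `B` is a monomorphic part of `R`: any two finite subsets of the domain of the
same cardinality which agree outside `B` induce isomorphic substructures. -/
def MonoPart (R : OrdBin ι) (B : Set R.V) : Prop :=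
  ∀ A A' : Set R.V, A.Finite → A'.Finite → A.ncard = A'.ncard →
    A \ B = A' \ B → Iso (R.restrict A) (R.restrict A')

/-- A monomorphic decomposition of `R`: a partition of the domain into monomorphic parts. -/
def MonoDecomp (R : OrdBin ι) (P : Set (Set R.V)) : Prop :=
  Setoid.IsPartition P ∧ ∀ B ∈ P, R.MonoPart B

/-- `R` has a monomorphic decomposition with finitely many blocks. -/
def HasFiniteMonoDecomp (R : OrdBin ι) : Prop :=
  ∃ P : Set (Set R.V), R.MonoDecomp P ∧ P.Finite

/-- A hereditary class of finite ordered binary structures. -/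
def Hereditary (C : Set (OrdBin ι)) : Prop :=
  (∀ R ∈ C, Finite R.V) ∧ ∀ R ∈ C, ∀ S : OrdBin ι, Embeds S R → S ∈ C

/-- `x` and `y` are `F`-equivalent: the substructures induced on `{x} ∪ F` and
`{y} ∪ F` are isomorphic. -/
def EqF (R : OrdBin ι) (F : Set R.V) (x y : R.V) : Prop :=
  Iso (R.restrict (insert x F)) (R.restrict (insert y F))

/-- `x ≃_{m,R} y`: `x` and `y` are `F`-equivalent for every `m`-element subset `F`
of `V \ {x, y}`. -/
def EqM (R : OrdBin ι) (m : ℕ) (x y : R.V) : Prop :=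
  ∀ F : Set R.V, F.Finite → F.ncard = m → x ∉ F → y ∉ F → EqF R F x y

/-- `x ≃_{≤m,R} y`: `x ≃_{m',R} y` for every `m' ≤ m`. -/
def EqLe (R : OrdBin ι) (m : ℕ) (x y : R.V) : Prop :=
  ∀ m' ≤ m, EqM R m' x y

/-- `x ≃_R y`: `x ≃_{m,R} y` for every `m`. -/
def EqR (R : OrdBin ι) (x y : R.V) : Prop :=
  ∀ m : ℕ, EqM R m x y

/-- `d(x,y) = d(x',y')`: the pair of truth values `(ρ_i(x,y), ρ_i(y,x))` agrees with
`(ρ_i(x',y'), ρ_i(y',x'))` for every `i`. -/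
def dEq (R : OrdBin ι) (x y x' y' : R.V) : Prop :=
  ∀ i : ι, (R.rel i x y ↔ R.rel i x' y') ∧ (R.rel i y x ↔ R.rel i y' x')

/-- `A` is an interval of the linear order `(V, le)`. -/
def IntervalLe (R : OrdBin ι) (A : Set R.V) : Prop :=
  ∀ u ∈ A, ∀ w ∈ A, ∀ z : R.V, R.le u z → R.le z w → z ∈ A

/-- `A` is an interval of `R`: an interval of the order such that all elements of `A`
have the same relations to each element outside `A`. -/
def IntervalR (R : OrdBin ι) (A : Set R.V) : Prop :=
  IntervalLe R A ∧ ∀ u ∈ A, ∀ u' ∈ A, ∀ w ∉ A, dEq R u w u' w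

/-- `R` is `n`-monomorphic: the substructures induced on any two `n`-element subsets
of the domain are isomorphic. -/
def NMono (R : OrdBin ι) (n : ℕ) : Prop :=
  ∀ A A' : Set R.V, A.Finite → A'.Finite → A.ncard = n → A'.ncard = n →
    Iso (R.restrict A) (R.restrict A')

/-- `R` is `(≤n)`-monomorphic. -/
def LeMono (R : OrdBin ι) (n : ℕ) : Prop :=
  ∀ m ≤ n, NMono R m

/-- `R` is monomorphic. -/
def Mono (R : OrdBin ι) : Prop :=
  ∀ n : ℕ, NMono R n

/-- The profile of `R`: the number of induced substructures on `n`-element subsets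
of the domain, counted up to isomorphism. -/
noncomputable def profileR (R : OrdBin ι) (n : ℕ) : ℕ :=
  Nat.card (Quot fun (A B : {A : Set R.V // A.Finite ∧ A.ncard = n}) =>
    Iso (R.restrict A.1) (R.restrict B.1))

/-- The profile of a class `C`: the number of members of `C` with exactly `n`
elements, counted up to isomorphism. -/
noncomputable def profileC (C : Set (OrdBin ι)) (n : ℕ) : ℕ :=
  Nat.card (Quot fun (R S : {R : OrdBin ι // R ∈ C ∧ Nat.card R.V = n}) =>
    Iso R.1 S.1)

end OrdBin

/-- The Fibonacci sequence with `F 0 = F 1 = 1`. -/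
def fib1 : ℕ → ℕ
  | 0 => 1
  | 1 => 1
  | n + 2 => fib1 (n + 1) + fib1 n

/-!
Write `x ≃_R y` when `x` and `y` can replace each other next to any finite set. This is an
equivalence relation; every monomorphic part lies in one class, every class is a monomorphic
part, and two finite sets meeting each class equally often induce isomorphic substructures.
As a finite chain is rigid, an order embedding of a finite set that moves each point within its
class is therefore a local isomorphism.

Given a finite monomorphic decomposition, there are finitely many classes, and the intervals are
the order-connected components of the classes; it remains to see that a class `C` has finitely
many components. If a point `w` of another class lies strictly between `u < u'` in `C`, monomorphy
of `C` lets `w` replace `u` next to any finite set avoiding `[u, u']`; were such a triple available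
away from every finite set, `w` would be equivalent to `u`. Hence a finite set `G` meets all these
intervals, and two points of `C` outside `G` with the same points of `G` below them lie in one
component.

Conversely, matching two equally large finite subsets of an interval `V_j` by an order embedding
that fixes everything outside `V_j` respects all the intervals, so it is a local isomorphism, and
each `V_j` is a monomorphic part.
-/

section

open Set

variable {α : Type*}

theorem Set.ncard_insert_sdiff_singleton_inter {A S : Set α} {x y : α} (hx : x ∈ A) (hy : y ∉ A)
    (hxy : x ∈ S ↔ y ∈ S) : (insert y (A \ {x}) ∩ S).ncard = (A ∩ S).ncard := by
  by_cases hxS : x ∈ S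
  · rw [insert_inter_of_mem (hxy.1 hxS), sdiff_inter_right_comm]
    exact ncard_exchange (fun h => hy h.1) ⟨hx, hxS⟩
  · rw [insert_inter_of_notMem (hxy.not.1 hxS), sdiff_inter_right_comm,
      sdiff_singleton_eq_self (fun h => hxS h.2)]

variable [LinearOrder α]

theorem Set.OrdConnected.le_iff_le_of_notMem {I : Set α} (hI : I.OrdConnected) {x y z : α}
    (hx : x ∈ I) (hy : y ∈ I) (hz : z ∉ I) : x ≤ z ↔ y ≤ z := by
  refine ⟨fun h => ?_, fun h => ?_⟩ <;> by_contra! h'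
  · exact hz (hI.out hx hy ⟨h, h'.le⟩)
  · exact hz (hI.out hy hx ⟨h, h'.le⟩)

theorem Set.OrdConnected.ge_iff_ge_of_notMem {I : Set α} (hI : I.OrdConnected) {x y z : α}
    (hx : x ∈ I) (hy : y ∈ I) (hz : z ∉ I) : z ≤ x ↔ z ≤ y := by
  refine ⟨fun h => ?_, fun h => ?_⟩ <;> by_contra! h'
  · exact hz (hI.out hy hx ⟨h'.le, h⟩)
  · exact hz (hI.out hx hy ⟨h'.le, h⟩)

theorem Set.Finite.nonempty_orderIso_of_ncard_eq {A B : Set α} (hA : A.Finite) (hB : B.Finite)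
    (h : A.ncard = B.ncard) : Nonempty (A ≃o B) := by
  have := hA.fintype
  have := hB.fintype
  refine ⟨(Fintype.orderIsoFinOfCardEq _ rfl).symm.trans (Fintype.orderIsoFinOfCardEq _ ?_)⟩
  rw [← Nat.card_eq_fintype_card, ← Nat.card_eq_fintype_card, Nat.card_coe_set_eq,
    Nat.card_coe_set_eq, h]

theorem Set.OrdConnected.exists_orderEmbedding {I A A' : Set α} (hI : I.OrdConnected)
    (hA : A.Finite) (hA' : A'.Finite) (hcard : A.ncard = A'.ncard) (hdiff : A \ I = A' \ I) :
    ∃ g : A ↪o α, range g = A' ∧ ∀ a : A, (a.1 ∈ I → g a ∈ I) ∧ (a.1 ∉ I → g a = a) := by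
  classical
  have hcardI : (A ∩ I).ncard = (A' ∩ I).ncard := by
    have h := ncard_inter_add_ncard_sdiff_eq_ncard A I hA
    have h' := ncard_inter_add_ncard_sdiff_eq_ncard A' I hA'
    rw [hdiff] at h
    omega
  obtain ⟨θ⟩ := (hA.inter_of_left I).nonempty_orderIso_of_ncard_eq (hA'.inter_of_left I) hcardI
  let g : A → α := fun a => if h : a.1 ∈ I then θ ⟨a, a.2, h⟩ else a
  have hg_in (a : A) (h : a.1 ∈ I) : g a = θ ⟨a, a.2, h⟩ := dif_pos h
  have hg_out (a : A) (h : a.1 ∉ I) : g a = a := dif_neg h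
  have hgI (a : A) (h : a.1 ∈ I) : g a ∈ I := hg_in a h ▸ (θ _).2.2
  have hle (a b : A) : g a ≤ g b ↔ a ≤ b := by
    by_cases ha : a.1 ∈ I <;> by_cases hb : b.1 ∈ I
    · rw [hg_in a ha, hg_in b hb, Subtype.coe_le_coe, θ.le_iff_le, Subtype.mk_le_mk]
      rfl
    · rw [hg_out b hb]
      exact hI.le_iff_le_of_notMem (hgI a ha) ha hb
    · rw [hg_out a ha]
      exact hI.ge_iff_ge_of_notMem (hgI b hb) hb ha
    · rw [hg_out a ha, hg_out b hb]
      rfl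
  refine ⟨OrderEmbedding.ofMapLEIff g hle, ?_, fun a => ⟨hgI a, hg_out a⟩⟩
  ext b
  constructor
  · rintro ⟨a, rfl⟩
    by_cases ha : a.1 ∈ I
    · exact (hg_in a ha ▸ (θ ⟨a, a.2, ha⟩).2.1 : g a ∈ A')
    · exact (hg_out a ha ▸ (hdiff ▸ ⟨a.2, ha⟩ : a.1 ∈ A' \ I).1 : g a ∈ A')
  · intro hb
    by_cases hbI : b ∈ I
    · set a := θ.symm ⟨b, hb, hbI⟩
      refine ⟨⟨a, a.2.1⟩, ?_⟩
      change g _ = b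
      rw [hg_in _ a.2.2]
      exact congrArg Subtype.val (θ.apply_symm_apply _)
    · exact ⟨⟨b, (hdiff ▸ ⟨hb, hbI⟩ : b ∈ A \ I).1⟩, hg_out _ hbI⟩

theorem Set.disjoint_Icc_of_setOf_lt_eq {G : Set α} {u u' : α} (hu : u ∉ G) (hu' : u' ∉ G)
    (h : {f ∈ G | f < u} = {f ∈ G | f < u'}) : Disjoint G (Icc u u') := by
  refine disjoint_left.2 fun f hf ⟨huf, hfu'⟩ => ?_
  have hfu' : f < u' := hfu'.lt_of_ne (by rintro rfl; exact hu' hf)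
  have hfu : f ∈ {f ∈ G | f < u} := h ▸ ⟨hf, hfu'⟩
  exact (huf.lt_of_ne (by rintro rfl; exact hu hf)).not_gt hfu.2

end

namespace OrdBin

open Set

variable {ι : Type} {R : OrdBin ι}

noncomputable instance (R : OrdBin ι) : LinearOrder R.V :=
  letI := R.linear
  { le := R.le
    le_refl := refl_of R.le
    le_trans := fun _ _ _ => trans_of R.le
    le_antisymm := fun _ _ => antisymm_of R.le
    le_total := total_of R.le
    toDecidableLE := Classical.decRel _ }

theorem intervalLe_iff_ordConnected {A : Set R.V} : R.IntervalLe A ↔ A.OrdConnected :=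
  ⟨fun h => ⟨fun _ hu _ hw z hz => h _ hu _ hw z hz.1 hz.2⟩,
    fun h _ hu _ hw _ hz hz' => h.out hu hw ⟨hz, hz'⟩⟩

theorem Iso.refl (R : OrdBin ι) : Iso R R :=
  ⟨Equiv.refl _, fun _ _ => Iff.rfl, fun _ _ _ => Iff.rfl⟩

theorem Iso.symm {R S : OrdBin ι} : Iso R S → Iso S R := by
  rintro ⟨e, hle, hrel⟩
  exact ⟨e.symm, fun x y => by simpa using (hle (e.symm x) (e.symm y)).symm,
    fun i x y => by simpa using (hrel i (e.symm x) (e.symm y)).symm⟩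

theorem Iso.trans {R S T : OrdBin ι} : Iso R S → Iso S T → Iso R T := by
  rintro ⟨e, hle, hrel⟩ ⟨f, hle', hrel'⟩
  exact ⟨e.trans f, fun x y => (hle x y).trans (hle' _ _),
    fun i x y => (hrel i x y).trans (hrel' i _ _)⟩

/-- Order preservation is not part of this notion: it is carried by the type `A ↪o R.V` of the
maps considered. -/
def IsLocalIso (R : OrdBin ι) {A : Set R.V} (g : A → R.V) : Prop :=
  ∀ (i : ι) (a b : A), R.rel i a b ↔ R.rel i (g a) (g b)

theorem iso_of_isLocalIso {A B : Set R.V} (g : A ↪o R.V) (hg : R.IsLocalIso g)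
    (hB : range g = B) : Iso (R.restrict A) (R.restrict B) := by
  subst hB
  exact ⟨OrderEmbedding.orderIso.toEquiv, fun a b => g.le_iff_le.symm, hg⟩

/-- A finite chain has a single order isomorphism onto a given chain, so the isomorphism
provided by `h` is `g` itself. -/
theorem isLocalIso_of_iso {A : Set R.V} (hA : A.Finite) (g : A ↪o R.V)
    (h : Iso (R.restrict A) (R.restrict (range g))) : R.IsLocalIso g := by
  obtain ⟨e, hle, hrel⟩ := h
  have := hA.to_subtype
  let e' : A ≃o range g := ⟨e, fun {a b} => (hle a b).symm⟩
  have he : e' = OrderEmbedding.orderIso := Subsingleton.elim _ _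
  intro i a b
  have hea (a : A) : (e' a : R.V) = g a := congrArg Subtype.val (DFunLike.congr_fun he a)
  rw [← hea, ← hea]
  exact hrel i a b

theorem eqR_iff {x y : R.V} : R.EqR x y ↔ ∀ F : Set R.V, F.Finite → x ∉ F → y ∉ F →
    Iso (R.restrict (insert x F)) (R.restrict (insert y F)) :=
  ⟨fun h F hF hx hy => h _ F hF rfl hx hy, fun h _ F hF _ hx hy => h F hF hx hy⟩

theorem EqR.refl (x : R.V) : R.EqR x x :=
  fun _ _ _ _ _ _ => Iso.refl _

theorem EqR.symm {x y : R.V} (h : R.EqR x y) : R.EqR y x :=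
  fun m F hF hFm hy hx => (h m F hF hFm hx hy).symm

/-- When `y ∈ F`, the detour through `y` is made inside `F \ {y}`, with `x` resp. `z`
added to the common part. -/
theorem EqR.trans {x y z : R.V} (hxy : R.EqR x y) (hyz : R.EqR y z) : R.EqR x z := by
  refine eqR_iff.2 fun F hF hx hz => ?_
  rcases eq_or_ne x z with rfl | hxz
  · exact Iso.refl _
  by_cases hy : y ∈ F
  · set F' := F \ {y}
    have hF' : F'.Finite := hF.sdiff
    have hxF' : x ∉ F' := fun h => hx h.1
    have hyF' : y ∉ F' := fun h => h.2 rfl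
    have hzF' : z ∉ F' := fun h => hz h.1
    have hyx : y ≠ x := ne_of_mem_of_not_mem hy hx
    have hyz' : y ≠ z := ne_of_mem_of_not_mem hy hz
    have hF : insert y F' = F := by rw [insert_sdiff_singleton, insert_eq_of_mem hy]
    have h₁ := eqR_iff.1 hyz (insert x F') (hF'.insert x)
      (by simp [hyx, hyF']) (by simp [hxz.symm, hzF'])
    have h₂ := eqR_iff.1 hxy (insert z F') (hF'.insert z)
      (by simp [hxz, hxF']) (by simp [hyz', hyF'])
    rw [insert_comm y x, insert_comm z x, hF] at h₁
    rw [insert_comm y z, hF] at h₂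
    exact h₁.trans h₂
  · exact (eqR_iff.1 hxy F hF hx hy).trans (eqR_iff.1 hyz F hF hy hz)

theorem MonoPart.eqR {B : Set R.V} (hB : R.MonoPart B) {x y : R.V} (hx : x ∈ B) (hy : y ∈ B) :
    R.EqR x y := by
  refine eqR_iff.2 fun F hF hxF hyF => hB _ _ (hF.insert x) (hF.insert y) ?_ ?_
  · rw [ncard_insert_of_notMem hxF hF, ncard_insert_of_notMem hyF hF]
  · rw [insert_sdiff_of_mem _ hx, insert_sdiff_of_mem _ hy]

def eqClass (R : OrdBin ι) (x : R.V) : Set R.V := {y | R.EqR x y}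

theorem mem_eqClass_self (x : R.V) : x ∈ R.eqClass x := EqR.refl x

theorem eqClass_eq {x y : R.V} (h : R.EqR x y) : R.eqClass x = R.eqClass y :=
  ext fun _ => ⟨h.symm.trans, h.trans⟩

/-- Exchange a point of `A \ A'` for an equivalent point of `A' \ A` until `A = A'`. -/
theorem iso_of_ncard_inter_eqClass {A A' : Set R.V} (hA : A.Finite) (hA' : A'.Finite)
    (h : ∀ v, (A ∩ R.eqClass v).ncard = (A' ∩ R.eqClass v).ncard) :
    Iso (R.restrict A) (R.restrict A') := by
  induction hn : (A \ A').ncard generalizing A with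
  | zero =>
    have hsub : A ⊆ A' := sdiff_eq_empty.1 ((ncard_eq_zero hA.sdiff).1 hn)
    obtain rfl : A = A' := by
      by_contra hne
      obtain ⟨y, hyA', hyA⟩ := exists_of_ssubset (hsub.ssubset_of_ne hne)
      have hlt : A ∩ R.eqClass y ⊂ A' ∩ R.eqClass y :=
        (ssubset_iff_of_subset (inter_subset_inter_left _ hsub)).2
          ⟨y, ⟨hyA', mem_eqClass_self y⟩, fun h => hyA h.1⟩
      exact (ncard_lt_ncard hlt (hA'.inter_of_left _)).ne (h y)
    exact Iso.refl _
  | succ n ih =>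
    obtain ⟨x, hxA, hxA'⟩ : (A \ A').Nonempty := nonempty_of_ncard_ne_zero (by omega)
    obtain ⟨y, ⟨hyA', hxy⟩, hyA⟩ : ((A' ∩ R.eqClass x) \ A).Nonempty := by
      by_contra hempty
      have hsub : A' ∩ R.eqClass x ⊆ A ∩ R.eqClass x := fun t ht =>
        ⟨by_contra fun htA => hempty ⟨t, ht, htA⟩, ht.2⟩
      have hlt : A' ∩ R.eqClass x ⊂ A ∩ R.eqClass x :=
        (ssubset_iff_of_subset hsub).2 ⟨x, ⟨hxA, mem_eqClass_self x⟩, fun h => hxA' h.1⟩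
      exact (ncard_lt_ncard hlt (hA.inter_of_left _)).ne (h x).symm
    have hiso : Iso (R.restrict A) (R.restrict (insert y (A \ {x}))) := by
      have := eqR_iff.1 hxy (A \ {x}) hA.sdiff (fun h => h.2 rfl) (fun h => hyA h.1)
      rwa [insert_sdiff_singleton, insert_eq_of_mem hxA] at this
    refine hiso.trans (ih (hA.sdiff.insert y) (fun v => ?_) ?_)
    · rw [ncard_insert_sdiff_singleton_inter hxA hyA
        ⟨fun h => EqR.trans h hxy, fun h => EqR.trans h hxy.symm⟩]
      exact h v
    · rw [insert_sdiff_of_mem _ hyA', sdiff_sdiff_comm,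
        ncard_sdiff_singleton_of_mem (show x ∈ A \ A' from ⟨hxA, hxA'⟩), hn, Nat.add_sub_cancel]

theorem monoPart_eqClass (x : R.V) : R.MonoPart (R.eqClass x) := by
  intro A A' hA hA' hcard hdiff
  refine iso_of_ncard_inter_eqClass hA hA' fun v => ?_
  by_cases hv : R.EqR x v
  · rw [← eqClass_eq hv]
    have h := ncard_inter_add_ncard_sdiff_eq_ncard A (R.eqClass x) hA
    have h' := ncard_inter_add_ncard_sdiff_eq_ncard A' (R.eqClass x) hA'
    rw [hdiff] at h
    omega
  · have hv : R.eqClass v ⊆ (R.eqClass x)ᶜ := fun t ht hxt => hv (hxt.trans ht.symm)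
    rw [← inter_eq_right.2 hv, ← inter_assoc, ← inter_assoc, ← sdiff_eq, ← sdiff_eq, hdiff]

theorem isLocalIso_of_eqR {A : Set R.V} (hA : A.Finite) (g : A ↪o R.V)
    (hg : ∀ a : A, R.EqR a (g a)) : R.IsLocalIso g := by
  have := hA.to_subtype
  refine isLocalIso_of_iso hA g (iso_of_ncard_inter_eqClass hA (finite_range g) fun v => ?_)
  have hpre : g ⁻¹' R.eqClass v = Subtype.val ⁻¹' R.eqClass v := by
    ext a
    exact ⟨fun h => EqR.trans h (hg a).symm, fun h => EqR.trans h (hg a)⟩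
  rw [← Subtype.image_preimage_coe, ← image_preimage_eq_range_inter, hpre,
    ncard_image_of_injective _ Subtype.val_injective, ncard_image_of_injective _ g.injective]

/-- The order embedding of `{u, w} ∪ F` onto `{u', w} ∪ F` fixing `F` is a local isomorphism
since `C` is monomorphic, and it sends `u` to `w`. -/
theorem iso_insert_of_mem_Ioo {C : Set R.V} (hC : R.MonoPart C) {u u' w : R.V} (hu : u ∈ C)
    (hu' : u' ∈ C) (hw : w ∈ Ioo u u') {F : Set R.V} (hF : F.Finite)
    (hFI : Disjoint F (Icc u u')) : Iso (R.restrict (insert u F)) (R.restrict (insert w F)) := by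
  set I := Icc u u'
  have huI : u ∈ I := left_mem_Icc.2 (hw.1.trans hw.2).le
  have hu'I : u' ∈ I := right_mem_Icc.2 (hw.1.trans hw.2).le
  have hwI : w ∈ I := Ioo_subset_Icc_self hw
  set A := insert u (insert w F)
  set A' := insert u' (insert w F)
  have hA : A.Finite := (hF.insert w).insert u
  have hA' : A'.Finite := (hF.insert w).insert u'
  have hcard : A.ncard = A'.ncard := by
    rw [ncard_insert_of_notMem (by simp [hw.1.ne, hFI.notMem_of_mem_right huI]) (hF.insert w),
      ncard_insert_of_notMem (by simp [hw.2.ne', hFI.notMem_of_mem_right hu'I]) (hF.insert w)]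
  have hdiff : A \ I = A' \ I := by rw [insert_sdiff_of_mem _ huI, insert_sdiff_of_mem _ hu'I]
  obtain ⟨g, hrange, hg⟩ := ordConnected_Icc.exists_orderEmbedding hA hA' hcard hdiff
  have hloc : R.IsLocalIso g := isLocalIso_of_iso hA g (hrange ▸ hC A A' hA hA' hcard
    (by rw [insert_sdiff_of_mem _ hu, insert_sdiff_of_mem _ hu']))
  have hgF (f : R.V) (hf : f ∈ F) : g ⟨f, by simp [A, hf]⟩ = f :=
    (hg _).2 (hFI.notMem_of_mem_left hf)
  have hgu : g ⟨u, mem_insert u _⟩ = w := by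
    have hlt : g ⟨u, mem_insert u _⟩ < g ⟨w, by simp [A]⟩ := g.lt_iff_lt.2 hw.1
    have hmem : g ⟨u, mem_insert u _⟩ ∈ A' := hrange ▸ mem_range_self _
    have hgI := (hg ⟨u, mem_insert u _⟩).1 huI
    rcases hmem with h | h | h
    · exact absurd ((hg ⟨w, by simp [A]⟩).1 hwI).2 (h ▸ hlt).not_ge
    · exact h
    · exact absurd hgI (hFI.notMem_of_mem_left h)
  have hsub : insert u F ⊆ A := insert_subset_insert (subset_insert w F)
  refine iso_of_isLocalIso (OrderEmbedding.ofMapLEIff (g ∘ inclusion hsub)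
    fun a b => g.le_iff_le) (fun i a b => hloc i (inclusion hsub a) (inclusion hsub b)) ?_
  ext b
  constructor
  · rintro ⟨⟨a, rfl | ha⟩, rfl⟩
    · exact Or.inl hgu
    · exact Or.inr ((hgF a ha).symm ▸ ha)
  · rintro (rfl | hb)
    · exact ⟨⟨u, mem_insert u F⟩, hgu⟩
    · exact ⟨⟨b, mem_insert_of_mem u hb⟩, hgF b hb⟩

theorem eqR_of_forall_exists_mem_Ioo {C : Set R.V} (hC : R.MonoPart C) {x y : R.V} (hx : x ∈ C)
    (h : ∀ F : Set R.V, F.Finite →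
      ∃ u ∈ C, ∃ u' ∈ C, ∃ w, R.EqR y w ∧ w ∈ Ioo u u' ∧ Disjoint F (Icc u u')) :
    R.EqR x y := by
  refine eqR_iff.2 fun F hF hxF hyF => ?_
  obtain ⟨u, hu, u', hu', w, hyw, hw, hFI⟩ := h F hF
  have huF : u ∉ F := hFI.notMem_of_mem_right (left_mem_Icc.2 (hw.1.trans hw.2).le)
  have hwF : w ∉ F := hFI.notMem_of_mem_right (Ioo_subset_Icc_self hw)
  exact (eqR_iff.1 (hC.eqR hx hu) F hF hxF huF).trans
    ((iso_insert_of_mem_Ioo hC hu hu' hw hF hFI).trans (eqR_iff.1 hyw.symm F hF hwF hyF))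

/-- For each class `D`, `eqR_of_forall_exists_mem_Ioo` gives a finite set meeting every such
interval with middle point in `D`; take the union over the finitely many classes. -/
theorem exists_finite_not_disjoint_Icc (hfin : (range R.eqClass).Finite) (x : R.V) :
    ∃ G : Set R.V, G.Finite ∧ ∀ u ∈ R.eqClass x, ∀ u' ∈ R.eqClass x, ∀ w ∉ R.eqClass x,
      w ∈ Ioo u u' → ¬Disjoint G (Icc u u') := by
  have key : ∀ D ∈ range R.eqClass, ∃ G : Set R.V, G.Finite ∧ ∀ u ∈ R.eqClass x,
      ∀ u' ∈ R.eqClass x, ∀ w ∈ D \ R.eqClass x, w ∈ Ioo u u' → ¬Disjoint G (Icc u u') := by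
    rintro _ ⟨y, rfl⟩
    by_contra! h
    have hxy : R.EqR x y := eqR_of_forall_exists_mem_Ioo (monoPart_eqClass x)
      (mem_eqClass_self x) fun F hF =>
        let ⟨u, hu, u', hu', w, hw, hIoo, hFI⟩ := h F hF
        ⟨u, hu, u', hu', w, hw.1, hIoo, hFI⟩
    obtain ⟨-, -, -, -, w, hw, -⟩ := h ∅ finite_empty
    exact hw.2 (hxy.trans hw.1)
  choose! G hG using key
  refine ⟨⋃ D ∈ range R.eqClass, G D, hfin.biUnion fun D hD => (hG D hD).1, ?_⟩
  intro u hu u' hu' w hw hIoo hdisj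
  exact (hG _ (mem_range_self w)).2 u hu u' hu' w ⟨mem_eqClass_self w, hw⟩ hIoo
    (hdisj.mono_left (subset_biUnion_of_mem (mem_range_self w)))

def eqComponent (R : OrdBin ι) (x : R.V) : Set R.V := ordConnectedComponent (R.eqClass x) x

theorem mem_eqComponent_self (x : R.V) : x ∈ R.eqComponent x :=
  self_mem_ordConnectedComponent.2 (mem_eqClass_self x)

theorem eqComponent_subset_eqClass (x : R.V) : R.eqComponent x ⊆ R.eqClass x :=
  ordConnectedComponent_subset

theorem ordConnected_eqComponent (x : R.V) : (R.eqComponent x).OrdConnected := by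
  unfold eqComponent
  infer_instance

theorem eqComponent_eq_of_mem {x y : R.V} (h : y ∈ R.eqComponent x) :
    R.eqComponent x = R.eqComponent y := by
  rw [eqComponent, eqComponent, ← eqClass_eq (eqComponent_subset_eqClass x h)]
  exact ordConnectedComponent_eq (mem_ordConnectedComponent.1 h)

theorem pairwiseDisjoint_range_eqComponent : (range R.eqComponent).PairwiseDisjoint id := by
  rintro _ ⟨x, rfl⟩ _ ⟨y, rfl⟩ hne
  refine disjoint_left.2 fun z hx hy => hne ?_
  rw [eqComponent_eq_of_mem hx, eqComponent_eq_of_mem hy]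

/-- Off the finite set `G` of `exists_finite_not_disjoint_Icc`, the component of a point of the
class is determined by the points of `G` below it. -/
theorem finite_eqComponent_image_eqClass (hfin : (range R.eqClass).Finite) (x : R.V) :
    (R.eqComponent '' R.eqClass x).Finite := by
  obtain ⟨G, hG, hGI⟩ := exists_finite_not_disjoint_Icc hfin x
  have key : ∀ u ∈ R.eqClass x \ G, ∀ u' ∈ R.eqClass x \ G,
      {f ∈ G | f < u} = {f ∈ G | f < u'} → R.eqComponent u = R.eqComponent u' := by
    intro u hu u' hu' hcut
    wlog huu' : u ≤ u' generalizing u u'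
    · exact (this u' hu' u hu hcut.symm (le_of_not_ge huu')).symm
    refine eqComponent_eq_of_mem (mem_ordConnectedComponent.2 ?_)
    rw [uIcc_of_le huu', ← eqClass_eq hu.1]
    intro z hz
    by_contra hzC
    have hzu : u < z := hz.1.lt_of_ne (by rintro rfl; exact hzC hu.1)
    have hzu' : z < u' := hz.2.lt_of_ne (by rintro rfl; exact hzC hu'.1)
    exact hGI u hu.1 u' hu'.1 z hzC ⟨hzu, hzu'⟩ (disjoint_Icc_of_setOf_lt_eq hu.2 hu'.2 hcut)
  have hsub : R.eqComponent '' R.eqClass x ⊆ R.eqComponent '' G ∪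
      ⋃ b ∈ {b | b ⊆ G}, R.eqComponent '' {v ∈ R.eqClass x \ G | {f ∈ G | f < v} = b} := by
    rintro _ ⟨v, hv, rfl⟩
    by_cases hvG : v ∈ G
    · exact Or.inl (mem_image_of_mem _ hvG)
    · exact Or.inr (mem_biUnion (sep_subset G _) ⟨v, ⟨⟨hv, hvG⟩, rfl⟩, rfl⟩)
  refine ((hG.image _).union (hG.finite_subsets.biUnion fun b _ => ?_)).subset hsub
  refine Subsingleton.finite ?_
  rintro _ ⟨u, ⟨hu, hcut⟩, rfl⟩ _ ⟨u', ⟨hu', hcut'⟩, rfl⟩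
  exact key u hu u' hu' (hcut.trans hcut'.symm)

theorem finite_range_eqClass (h : R.HasFiniteMonoDecomp) : (range R.eqClass).Finite := by
  obtain ⟨P, ⟨hP, hmono⟩, hPfin⟩ := h
  refine (hPfin.biUnion (t := fun B => R.eqClass '' B) fun B hB => ?_).subset ?_
  · refine Subsingleton.finite ?_
    rintro _ ⟨a, ha, rfl⟩ _ ⟨b, hb, rfl⟩
    exact eqClass_eq ((hmono B hB).eqR ha hb)
  · rintro _ ⟨x, rfl⟩
    obtain ⟨B, ⟨hBP, hxB⟩, -⟩ := hP.2 x
    exact mem_biUnion hBP (mem_image_of_mem _ hxB)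

theorem finite_range_eqComponent (h : R.HasFiniteMonoDecomp) : (range R.eqComponent).Finite := by
  have hfin := finite_range_eqClass h
  refine (hfin.biUnion (t := fun C => R.eqComponent '' C) fun C hC => ?_).subset ?_
  · obtain ⟨x, rfl⟩ := hC
    exact finite_eqComponent_image_eqClass hfin x
  · rintro _ ⟨x, rfl⟩
    exact mem_biUnion (mem_range_self x) (mem_image_of_mem _ (mem_eqClass_self x))

theorem monoPart_of_forall_isLocalIso {I : Set R.V} (hI : I.OrdConnected)
    (h : ∀ A : Set R.V, A.Finite → ∀ g : A ↪o R.V, (∀ a : A, a.1 ∈ I → g a ∈ I) →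
      (∀ a : A, a.1 ∉ I → g a = a) → R.IsLocalIso g) :
    R.MonoPart I := by
  intro A A' hA hA' hcard hdiff
  obtain ⟨g, hrange, hg⟩ := hI.exists_orderEmbedding hA hA' hcard hdiff
  exact iso_of_isLocalIso g (h A hA g (fun a => (hg a).1) fun a => (hg a).2) hrange

open Function in
theorem hasFiniteMonoDecomp_of_iUnion_eq_univ {κ : Type*} [Finite κ] (W : κ → Set R.V)
    (hdisj : Pairwise (Disjoint on W)) (hcov : ⋃ j, W j = univ) (hW : ∀ j, R.MonoPart (W j)) :
    R.HasFiniteMonoDecomp := by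
  refine ⟨range W \ {∅}, ⟨?_, ?_⟩, (finite_range W).sdiff⟩
  · refine PairwiseDisjoint.isPartition_of_exists_of_ne_empty ?_ (fun a => ?_) fun h => h.2 rfl
    · rintro _ ⟨⟨j, rfl⟩, -⟩ _ ⟨⟨j', rfl⟩, -⟩ hne
      exact hdisj fun h => hne (h ▸ rfl)
    · obtain ⟨j, hj⟩ := mem_iUnion.1 (hcov ▸ mem_univ a)
      exact ⟨W j, ⟨mem_range_self j, (nonempty_of_mem hj).ne_empty⟩, hj⟩
  · rintro _ ⟨⟨j, rfl⟩, -⟩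
    exact hW j

end OrdBin

/-- An ordered binary structure `R` admits a finite monomorphic
decomposition iff there is a finite partition of its domain into intervals of the linear
order such that every isomorphism between finite induced suborders of `(V, ≤)` mapping
each interval into itself is a local isomorphism of `R`. -/
theorem hasFiniteMonoDecomp_iff_interval_partition {ι : Type} (R : OrdBin ι) :
    R.HasFiniteMonoDecomp ↔
      ∃ (m : ℕ) (W : Fin m → Set R.V),
        (∀ j : Fin m, OrdBin.IntervalLe R (W j)) ∧
        (∀ j j' : Fin m, j ≠ j' → Disjoint (W j) (W j')) ∧
        (⋃ j : Fin m, W j) = Set.univ ∧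
        ∀ A : Set R.V, A.Finite → ∀ g : A → R.V, Function.Injective g →
          (∀ a b : A, R.le a.1 b.1 ↔ R.le (g a) (g b)) →
          (∀ (j : Fin m) (a : A), a.1 ∈ W j → g a ∈ W j) →
          ∀ (i : ι) (a b : A), R.rel i a.1 b.1 ↔ R.rel i (g a) (g b) := by
  constructor
  · intro h
    obtain ⟨m, W, hWinj, hW⟩ := (OrdBin.finite_range_eqComponent h).fin_param
    have hWcomp (j : Fin m) : W j ∈ Set.range R.eqComponent := hW ▸ Set.mem_range_self j
    have hmem (x : R.V) : R.eqComponent x ∈ Set.range W := hW ▸ Set.mem_range_self x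
    refine ⟨m, W, fun j => ?_, fun j j' hne => ?_, ?_, fun A hA g _ hle hgW => ?_⟩
    · obtain ⟨x, hx⟩ := hWcomp j
      rw [← hx, OrdBin.intervalLe_iff_ordConnected]
      exact OrdBin.ordConnected_eqComponent x
    · exact OrdBin.pairwiseDisjoint_range_eqComponent (hWcomp j) (hWcomp j') (hWinj.ne hne)
    · refine Set.eq_univ_of_forall fun x => Set.mem_iUnion.2 ?_
      obtain ⟨j, hj⟩ := hmem x
      exact ⟨j, hj ▸ OrdBin.mem_eqComponent_self x⟩
    · refine OrdBin.isLocalIso_of_eqR hA (OrderEmbedding.ofMapLEIff g fun a b => (hle a b).symm)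
        fun a => ?_
      obtain ⟨j, hj⟩ := hmem a
      have ha : (a : R.V) ∈ W j := hj ▸ OrdBin.mem_eqComponent_self _
      exact OrdBin.eqComponent_subset_eqClass _ (hj ▸ hgW j a ha)
  · rintro ⟨m, W, hW, hdisj, hcov, hloc⟩
    refine OrdBin.hasFiniteMonoDecomp_of_iUnion_eq_univ W (fun j j' => hdisj j j') hcov fun j =>
      OrdBin.monoPart_of_forall_isLocalIso (OrdBin.intervalLe_iff_ordConnected.1 (hW j))
        fun A hA g hgI hgfix =>
          hloc A hA g g.injective (fun a b => g.le_iff_le.symm) fun k a hk => ?_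
    by_cases ha : a.1 ∈ W j
    · obtain rfl : k = j := by_contra fun hkj => (hdisj k j hkj).notMem_of_mem_left hk ha
      exact hgI a ha
    · exact hgfix a ha ▸ hk
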